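/- Let $D : \Omega \to \mathbb{R}^+$ be a random variable on a probability space and let $\rho : \Omega \to \mathbb{R}^+$ be a random variable such that $D \le e^\rho$ almost surely and $\mathbb{P}\{\rho > R\} \le C\exp(\alpha R/2 - R^2/(8\sigma^2))$ for all $R \ge R_0$, for some constants $C, \alpha, \sigma, R_0 > 0$. If $h : \mathbb{R}^+ \to \mathbb{R}^+$ is monotonically increasing with $h(e^y) = O(\exp[y^2(1/(8\sigma^2) - \delta)])$ for some $\delta > 0$, then $\mathbb{E}[h(D)] < \infty$. -/

import Mathlib

/-!
Cover `Ω` by the events `{k - 1 < ρ}`, `k ∈ ℕ`: since `h ∘ exp` is monotone, `h (e^ρ)` is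
bounded by `∑ₖ h(eᵏ) 1{k - 1 < ρ}`, so `E[h(e^ρ)] ≤ ∑ₖ h(eᵏ) P{ρ > k - 1}`. For large `k` the
growth bound on `h` and the tail bound on `ρ` make the `k`-th term `O(exp(-δk² + O(k)))`, which
is summable. Finally `h(D) ≤ h(e^ρ)` almost surely wherever `D > 0`.
-/

open MeasureTheory Filter Set
open scoped ENNReal

lemma Real.summable_exp_neg_mul_sq_add {δ : ℝ} (hδ : 0 < δ) (β γ : ℝ) :
    Summable fun n : ℕ => Real.exp (-δ * n ^ 2 + β * n + γ) := by
  refine (Real.summable_exp_neg_nat.mul_left (Real.exp (γ + (β + 1) ^ 2 / (4 * δ)))).of_nonneg_of_le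
    (fun _ => (Real.exp_pos _).le) fun n => ?_
  rw [← Real.exp_add, Real.exp_le_exp]
  have hsq : -δ * n ^ 2 + β * n + γ = γ + (β + 1) ^ 2 / (4 * δ) + -n
      - (β + 1 - 2 * δ * n) ^ 2 / (4 * δ) := by
    field_simp
    ring
  rw [hsq]
  linarith [div_nonneg (sq_nonneg (β + 1 - 2 * δ * n)) (by positivity : (0:ℝ) ≤ 4 * δ)]

lemma ENNReal.tsum_ne_top_of_eventually_le_ofReal {f : ℕ → ℝ≥0∞} {g : ℕ → ℝ}
    (hf : ∀ n, f n ≠ ∞) (hg : Summable g) (hfg : ∀ᶠ n in atTop, f n ≤ ENNReal.ofReal (g n)) :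
    ∑' n, f n ≠ ∞ := by
  lift f to ℕ → NNReal using hf
  rw [ENNReal.tsum_coe_ne_top_iff_summable, ← NNReal.summable_coe]
  refine (summable_abs_iff.2 hg).of_norm_bounded_eventually_nat ?_
  filter_upwards [hfg] with n hn
  rw [NNReal.norm_eq]
  simpa using ENNReal.toReal_le_of_le_ofReal (abs_nonneg _)
    (hn.trans (ENNReal.ofReal_le_ofReal (le_abs_self _)))

lemma monotone_comp_exp {h : ℝ → ℝ} (hh : MonotoneOn h (Ioi 0)) : Monotone (h ∘ Real.exp) :=
  fun _ _ hxy => hh (Real.exp_pos _) (Real.exp_pos _) (Real.exp_le_exp.2 hxy)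

section

variable {Ω : Type*} [MeasurableSpace Ω] {μ : Measure Ω} {ρ : Ω → ℝ}

theorem lintegral_comp_le_tsum_mul_measure_lt (hρ : Measurable ρ) (hρ0 : ∀ ω, 0 ≤ ρ ω)
    {φ : ℝ → ℝ≥0∞} (hφ : MonotoneOn φ (Ici 0)) :
    ∫⁻ ω, φ (ρ ω) ∂μ ≤ ∑' k : ℕ, φ k * μ {ω | (k : ℝ) - 1 < ρ ω} := by
  have hmeas (k : ℕ) : MeasurableSet {ω | (k : ℝ) - 1 < ρ ω} :=
    measurableSet_lt measurable_const hρ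
  calc ∫⁻ ω, φ (ρ ω) ∂μ
      ≤ ∫⁻ ω, ∑' k : ℕ, {ω | (k : ℝ) - 1 < ρ ω}.indicator (fun _ => φ k) ω ∂μ := by
        refine lintegral_mono fun ω => ?_
        have hk : ω ∈ {ω' | (⌈ρ ω⌉₊ : ℝ) - 1 < ρ ω'} :=
          sub_lt_iff_lt_add.2 (Nat.ceil_lt_add_one (hρ0 ω))
        calc φ (ρ ω) ≤ φ ⌈ρ ω⌉₊ := hφ (hρ0 ω) (mem_Ici.2 (Nat.cast_nonneg _)) (Nat.le_ceil _)
          _ = _ := (indicator_of_mem hk fun _ => φ ⌈ρ ω⌉₊).symm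
          _ ≤ _ := ENNReal.le_tsum (f := fun k : ℕ => {ω | (k : ℝ) - 1 < ρ ω}.indicator
              (fun _ => φ k) ω) _
    _ = ∑' k : ℕ, φ k * μ {ω | (k : ℝ) - 1 < ρ ω} := by
        rw [lintegral_tsum fun k => (measurable_const.indicator (hmeas k)).aemeasurable]
        simp_rw [lintegral_indicator_const (hmeas _)]

lemma measurable_comp_of_monotoneOn_Ioi {h : ℝ → ℝ} (hh : MonotoneOn h (Ioi 0))
    {D : Ω → ℝ} (hD : Measurable D) (hD0 : ∀ ω, 0 ≤ D ω) : Measurable fun ω => h (D ω) := by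
  have hite : (fun ω => h (D ω)) =
      fun ω => if D ω = 0 then h 0 else (h ∘ Real.exp) (Real.log (D ω)) := by
    ext ω
    split_ifs with h0
    · rw [h0]
    · rw [Function.comp_apply, Real.exp_log ((hD0 ω).lt_of_ne' h0)]
  rw [hite]
  exact Measurable.ite (measurableSet_eq_fun hD measurable_const) measurable_const
    ((monotone_comp_exp hh).measurable.comp (Real.measurable_log.comp hD))

theorem integrable_comp_of_gaussian_tail [IsFiniteMeasure μ] (hρ : Measurable ρ)
    (hρ0 : ∀ ω, 0 ≤ ρ ω) {a b C R₀ : ℝ}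
    (htail : ∀ R ≥ R₀, μ {ω | R < ρ ω} ≤ ENNReal.ofReal (C * Real.exp (b * R - a * R ^ 2)))
    {φ : ℝ → ℝ} (hφ : Monotone φ) (hφ0 : ∀ y, 0 ≤ φ y) {δ C' y₀ : ℝ} (hδ : 0 < δ)
    (hφO : ∀ y ≥ y₀, φ y ≤ C' * Real.exp ((a - δ) * y ^ 2)) :
    Integrable (fun ω => φ (ρ ω)) μ := by
  refine ⟨(hφ.measurable.comp hρ).aestronglyMeasurable, ?_⟩
  rw [hasFiniteIntegral_iff_ofReal (Eventually.of_forall fun ω => hφ0 _)]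
  refine (lintegral_comp_le_tsum_mul_measure_lt hρ hρ0
    ((ENNReal.ofReal_mono.comp hφ).monotoneOn _)).trans_lt (lt_top_iff_ne_top.2 ?_)
  refine ENNReal.tsum_ne_top_of_eventually_le_ofReal
    (fun k => ENNReal.mul_ne_top ENNReal.ofReal_ne_top (measure_ne_top _ _))
    ((Real.summable_exp_neg_mul_sq_add hδ (2 * a + b) (-(a + b))).mul_left (C' * C)) ?_
  filter_upwards [eventually_ge_atTop ⌈max (R₀ + 1) y₀⌉₊] with k hk
  have hk' : max (R₀ + 1) y₀ ≤ k := Nat.ceil_le.1 hk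
  have hkR : R₀ ≤ (k : ℝ) - 1 := by linarith [le_max_left (R₀ + 1) y₀]
  have hky : y₀ ≤ (k : ℝ) := (le_max_right _ _).trans hk'
  calc ENNReal.ofReal (φ k) * μ {ω | (k : ℝ) - 1 < ρ ω}
      ≤ ENNReal.ofReal (C' * Real.exp ((a - δ) * k ^ 2)) *
          ENNReal.ofReal (C * Real.exp (b * (k - 1) - a * (k - 1) ^ 2)) :=
        mul_le_mul' (ENNReal.ofReal_le_ofReal (hφO _ hky)) (htail _ hkR)
    _ = ENNReal.ofReal (C' * C * Real.exp (-δ * k ^ 2 + (2 * a + b) * k + -(a + b))) := by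
        rw [← ENNReal.ofReal_mul ((hφ0 _).trans (hφO _ hky)), mul_mul_mul_comm,
          ← Real.exp_add]
        ring_nf

end

theorem integrability_of_dominated_functional_general
    {Ω : Type*} [MeasurableSpace Ω] (μ : Measure Ω) [IsProbabilityMeasure μ]
    (D ρ : Ω → ℝ) (hDmeas : Measurable D) (hρmeas : Measurable ρ)
    (hDpos : ∀ ω, 0 ≤ D ω) (hρpos : ∀ ω, 0 ≤ ρ ω)
    (hdom : ∀ᵐ ω ∂μ, D ω ≤ Real.exp (ρ ω))
    (C α σ R₀ : ℝ)
    (htail : ∀ R ≥ R₀, μ {ω | R < ρ ω}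
      ≤ ENNReal.ofReal (C * Real.exp (α * R / 2 - R ^ 2 / (8 * σ ^ 2))))
    (δ : ℝ) (hδ : 0 < δ)
    (h : ℝ → ℝ) (hpos : ∀ y > 0, 0 ≤ h y)
    (hmono : MonotoneOn h (Set.Ioi (0:ℝ)))
    (hO : ∃ C' y₀ : ℝ, ∀ y ≥ y₀,
      h (Real.exp y) ≤ C' * Real.exp (y ^ 2 * (1 / (8 * σ ^ 2) - δ))) :
    Integrable (fun ω => h (D ω)) μ := by
  obtain ⟨C', y₀, hO⟩ := hO
  have hexp : Integrable (fun ω => h (Real.exp (ρ ω))) μ :=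
    integrable_comp_of_gaussian_tail (a := 1 / (8 * σ ^ 2)) (b := α / 2) hρmeas hρpos
      (fun R hR => (htail R hR).trans_eq (by ring_nf)) (monotone_comp_exp hmono)
      (fun y => hpos _ (Real.exp_pos y)) hδ (fun y hy => (hO y hy).trans_eq (by ring_nf))
  -- `D` may vanish, and `h 0` is a junk value outside the domain `ℝ⁺` of `h`
  refine ((integrable_const |h 0|).add hexp).mono
    (measurable_comp_of_monotoneOn_Ioi hmono hDmeas hDpos).aestronglyMeasurable ?_
  filter_upwards [hdom] with ω hω
  have hexp0 : 0 ≤ h (Real.exp (ρ ω)) := hpos _ (Real.exp_pos _)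
  rw [Real.norm_eq_abs, Pi.add_apply, Real.norm_of_nonneg (add_nonneg (abs_nonneg _) hexp0)]
  rcases (hDpos ω).eq_or_lt with hD0 | hD0
  · rw [← hD0]
    linarith
  · rw [abs_of_nonneg (hpos _ hD0)]
    linarith [hmono hD0 (Real.exp_pos _) hω, abs_nonneg (h 0)]

/-- Integrability of a functional dominated by `e^ρ`, when `ρ` has a Gaussian-type
tail bound: if `D ≤ e^ρ` a.s., `P{ρ > R} ≤ C exp(αR/2 - R²/(8σ²))` for `R ≥ R₀`,
and `h : ℝ⁺ → ℝ⁺` is monotone increasing with `h(e^y) = O(exp[y²(1/(8σ²) - δ)])`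
for some `δ > 0`, then `E[h(D)] < ∞`. -/
theorem integrability_of_dominated_functional
    {Ω : Type*} [MeasurableSpace Ω] (μ : Measure Ω) [IsProbabilityMeasure μ]
    (D ρ : Ω → ℝ) (hDmeas : Measurable D) (hρmeas : Measurable ρ)
    (hDpos : ∀ ω, 0 ≤ D ω) (hρpos : ∀ ω, 0 ≤ ρ ω)
    (hdom : ∀ᵐ ω ∂μ, D ω ≤ Real.exp (ρ ω))
    (C α σ R₀ : ℝ) (hC : 0 < C) (hα : 0 < α) (hσ : 0 < σ) (hR₀ : 0 < R₀)
    (htail : ∀ R ≥ R₀, μ {ω | R < ρ ω}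
      ≤ ENNReal.ofReal (C * Real.exp (α * R / 2 - R ^ 2 / (8 * σ ^ 2))))
    (δ : ℝ) (hδ : 0 < δ)
    (h : ℝ → ℝ) (hpos : ∀ y > 0, 0 ≤ h y)
    (hmono : MonotoneOn h (Set.Ioi (0:ℝ)))
    (hO : ∃ C' y₀ : ℝ, ∀ y ≥ y₀,
      h (Real.exp y) ≤ C' * Real.exp (y ^ 2 * (1 / (8 * σ ^ 2) - δ))) :
    Integrable (fun ω => h (D ω)) μ :=
  integrability_of_dominated_functional_general μ D ρ hDmeas hρmeas hDpos hρpos hdom C α σ R₀ htail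
    δ hδ h hpos hmono hO
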